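/- arXiv:0811.3712 — 2 statements merged into one kernel-verified Lean document; each statement's English description precedes it below -/
import Mathlib

section
/- Let X and Y be random variables such that P(X > x) ≤ f(x) for all x ≥ 0 with f nonnegative and non-increasing, and P(Y ≤ x) ≤ g(x) for all x ≥ 0 with g nonnegative and non-decreasing. Then for all x ≥ 0, P(X − Y ≥ x) ≤ inf_{z ≥ 0} [f(x + z) + g(z)]. -/
/-!
For every `z ≥ 0`, the event `X - Y ≥ x` lies in `{X > x + z} ∪ {Y ≤ z}`, so the union bound gives
`f (x + z) + g z`; taking the infimum over `z` gives the claim.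
-/

open MeasureTheory Set

/-- The `inf-sum` operation `(f ⊙ g)(x) = inf_{z ≥ 0} (f (x+z) + g z)`. -/
noncomputable def infSum (f g : ℝ → ℝ) (x : ℝ) : ℝ :=
  sInf ((fun z => f (x + z) + g z) '' Set.Ici 0)

/- Holds even when the image is unbounded below and `sInf` returns the junk value `0`:
`ENNReal.ofReal` of that infimum is then `0` as well. -/
theorem ofReal_infSum (f g : ℝ → ℝ) (x : ℝ) :
    ENNReal.ofReal (infSum f g x) = ⨅ z : Ici (0 : ℝ), ENNReal.ofReal (f (x + z) + g z) := by
  have : Nonempty (Ici (0 : ℝ)) := nonempty_Ici.to_subtype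
  rw [infSum, sInf_image', ENNReal.ofReal_iInf]

theorem setOf_le_sub_subset {Ω : Type*} (X Y : Ω → ℝ) (x z : ℝ) :
    {ω | x ≤ X ω - Y ω} ⊆ {ω | x + z < X ω} ∪ {ω | Y ω ≤ z} := by
  intro ω hω
  by_cases hY : Y ω ≤ z
  · exact Or.inr hY
  · exact Or.inl (by simp only [mem_ofPred_eq] at hω ⊢; linarith)

theorem measure_le_sub_le_add {Ω : Type*} [MeasurableSpace Ω] (μ : Measure Ω) (X Y : Ω → ℝ)
    (x z : ℝ) : μ {ω | x ≤ X ω - Y ω} ≤ μ {ω | x + z < X ω} + μ {ω | Y ω ≤ z} :=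
  (measure_mono (setOf_le_sub_subset X Y x z)).trans (measure_union_le _ _)

theorem stmt1_general {Ω : Type*} [MeasurableSpace Ω] (μ : Measure Ω)
    (X Y : Ω → ℝ) (f g : ℝ → ℝ)
    (hf0 : ∀ x, 0 ≤ x → 0 ≤ f x)
    (hg0 : ∀ x, 0 ≤ x → 0 ≤ g x)
    (hXf : ∀ x, 0 ≤ x → μ {ω | x < X ω} ≤ ENNReal.ofReal (f x))
    (hYg : ∀ x, 0 ≤ x → μ {ω | Y ω ≤ x} ≤ ENNReal.ofReal (g x)) :
    ∀ x, 0 ≤ x → μ {ω | x ≤ X ω - Y ω} ≤ ENNReal.ofReal (infSum f g x) := by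
  intro x hx
  rw [ofReal_infSum]
  refine le_iInf fun ⟨z, hz⟩ => ?_
  have hxz : 0 ≤ x + z := add_nonneg hx hz
  calc μ {ω | x ≤ X ω - Y ω} ≤ μ {ω | x + z < X ω} + μ {ω | Y ω ≤ z} :=
        measure_le_sub_le_add μ X Y x z
    _ ≤ ENNReal.ofReal (f (x + z)) + ENNReal.ofReal (g z) := add_le_add (hXf _ hxz) (hYg z hz)
    _ = ENNReal.ofReal (f (x + z) + g z) := (ENNReal.ofReal_add (hf0 _ hxz) (hg0 z hz)).symm

theorem stmt1 {Ω : Type*} [MeasurableSpace Ω] (μ : Measure Ω) [IsProbabilityMeasure μ]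
    (X Y : Ω → ℝ) (f g : ℝ → ℝ)
    (hf0 : ∀ x, 0 ≤ x → 0 ≤ f x) (hfdec : ∀ x y, 0 ≤ x → x ≤ y → f y ≤ f x)
    (hg0 : ∀ x, 0 ≤ x → 0 ≤ g x) (hginc : ∀ x y, 0 ≤ x → x ≤ y → g x ≤ g y)
    (hXf : ∀ x, 0 ≤ x → μ {ω | x < X ω} ≤ ENNReal.ofReal (f x))
    (hYg : ∀ x, 0 ≤ x → μ {ω | Y ω ≤ x} ≤ ENNReal.ofReal (g x)) :
    ∀ x, 0 ≤ x → μ {ω | x ≤ X ω - Y ω} ≤ ENNReal.ofReal (infSum f g x) :=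
  stmt1_general μ X Y f g hf0 hg0 hXf hYg
end

section
/- Concatenation (two nodes, pathwise inequality): Let A¹ be the input to node 1, A¹* = A² its output which is input to node 2, and A²* the final output, with information functions H. For any x ≥ 0, β¹, β², define [β]ˣ(t) = max(β(t), x). Then for all t ≥ 0: sup_{0≤s≤t} [ (H(A¹) ⊗ [β¹ ⊗ β²]ˣ)(s) − H(A²*(s)) ] ≤ sup_{0≤u≤t} [ (H(A¹) ⊗ [β¹]ˣ)(u) − H(A¹*(u)) ] + sup_{0≤s≤t} [ (H(A²) ⊗ [β²]ˣ)(s) − H(A²*(s)) ]. -/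
/-!
Min-plus convolution is monotone and, for nonnegative curves, associative in the direction
`f ⊗ (g ⊗ h) ≤ (f ⊗ g) ⊗ h`. Combined with `[β¹ ⊗ β²]ˣ ≤ [β¹]ˣ ⊗ [β²]ˣ` this gives
`H(A¹) ⊗ [β¹ ⊗ β²]ˣ ≤ (H(A¹) ⊗ [β¹]ˣ) ⊗ [β²]ˣ`. On `[0, t]` the inner convolution is at most
`S₁ + H(A¹*)`, where `S₁` is the first supremum, so the whole is at most
`S₁ + H(A¹*) ⊗ [β²]ˣ ≤ S₁ + S₂ + H(A²*)`.
-/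

open Set

/-- The `(min,+)` convolution `(f ⊗ g)(s) = inf_{0 ≤ u ≤ s} (f u + g (s - u))`. -/
noncomputable def minConv (f g : ℝ → ℝ) (s : ℝ) : ℝ :=
  sInf ((fun u => f u + g (s - u)) '' Set.Icc 0 s)

/-- The clipped curve `[β]ˣ(t) = max (β t) x`. -/
def clip (β : ℝ → ℝ) (x : ℝ) : ℝ → ℝ := fun t => max (β t) x

section MinConv

variable {f f' g h : ℝ → ℝ} {s c : ℝ}

lemma minConv_le (hf : ∀ v, 0 ≤ f v) (hg : ∀ v, 0 ≤ g v) {u : ℝ} (hu : u ∈ Icc 0 s) :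
    minConv f g s ≤ f u + g (s - u) :=
  csInf_le ⟨0, by rintro _ ⟨v, -, rfl⟩; exact add_nonneg (hf v) (hg _)⟩ ⟨u, hu, rfl⟩

lemma le_minConv (hs : 0 ≤ s) (h : ∀ u ∈ Icc 0 s, c ≤ f u + g (s - u)) :
    c ≤ minConv f g s := by
  refine le_csInf ⟨_, 0, ⟨le_rfl, hs⟩, rfl⟩ ?_
  rintro _ ⟨u, hu, rfl⟩
  exact h u hu

lemma minConv_nonneg (hf : ∀ v, 0 ≤ f v) (hg : ∀ v, 0 ≤ g v) (s : ℝ) : 0 ≤ minConv f g s :=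
  Real.sInf_nonneg (by rintro _ ⟨u, -, rfl⟩; exact add_nonneg (hf u) (hg _))

lemma minConv_mono_right (hf : ∀ v, 0 ≤ f v) (hg : ∀ v, 0 ≤ g v) (hs : 0 ≤ s)
    (hgh : ∀ u ∈ Icc 0 s, g u ≤ h u) : minConv f g s ≤ minConv f h s :=
  le_minConv hs fun _ hu => (minConv_le hf hg hu).trans <|
    add_le_add_right (hgh _ ⟨sub_nonneg.2 hu.2, sub_le_self _ hu.1⟩) _

lemma minConv_le_add_minConv (hf : ∀ v, 0 ≤ f v) (hh : ∀ v, 0 ≤ h v) (hs : 0 ≤ s)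
    (hff' : ∀ v ∈ Icc 0 s, f v ≤ c + f' v) : minConv f h s ≤ c + minConv f' h s := by
  rw [← sub_le_iff_le_add']
  refine le_minConv hs fun v hv => ?_
  linarith [minConv_le hf hh hv, hff' v hv]

lemma minConv_assoc_le (hf : ∀ v, 0 ≤ f v) (hg : ∀ v, 0 ≤ g v) (hh : ∀ v, 0 ≤ h v)
    (hs : 0 ≤ s) : minConv f (minConv g h) s ≤ minConv (minConv f g) h s := by
  refine le_minConv hs fun v hv => ?_
  rw [← sub_le_iff_le_add]
  refine le_minConv hv.1 fun u hu => ?_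
  have hfu := minConv_le hf (minConv_nonneg hg hh) ⟨hu.1, hu.2.trans hv.2⟩
  have hgh := minConv_le hg hh (⟨sub_nonneg.2 hu.2, by linarith [hv.2]⟩ : v - u ∈ Icc 0 (s - u))
  rw [sub_sub_sub_cancel_right] at hgh
  linarith

lemma bddAbove_image_minConv_sub {G : ℝ → ℝ} (hf : ∀ v, 0 ≤ f v) (hg : ∀ v, 0 ≤ g v)
    (hg_mono : Monotone g) (hG : ∀ v, 0 ≤ G v) (t : ℝ) :
    BddAbove ((fun s => minConv f g s - G s) '' Icc 0 t) := by
  refine ⟨f 0 + g t, ?_⟩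
  rintro _ ⟨s, hs, rfl⟩
  have h0 := minConv_le hf hg ⟨le_rfl, hs.1⟩
  rw [sub_zero] at h0
  linarith [hg_mono hs.2, hG s]

end MinConv

section Clip

variable {β β₁ β₂ : ℝ → ℝ}

lemma clip_nonneg (hβ : ∀ v, 0 ≤ β v) (x v : ℝ) : 0 ≤ clip β x v :=
  (hβ v).trans (le_max_left _ _)

lemma Monotone.clip (hβ : Monotone β) (x : ℝ) : Monotone (clip β x) :=
  fun _ _ hab => max_le_max (hβ hab) le_rfl

lemma clip_minConv_le_minConv_clip (hβ₁ : ∀ v, 0 ≤ β₁ v) (hβ₂ : ∀ v, 0 ≤ β₂ v) {x s : ℝ}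
    (hs : 0 ≤ s) : clip (minConv β₁ β₂) x s ≤ minConv (clip β₁ x) (clip β₂ x) s :=
  le_minConv hs fun _ hu => max_le
    ((minConv_le hβ₁ hβ₂ hu).trans (add_le_add (le_max_left _ _) (le_max_left _ _)))
    (le_add_of_le_of_nonneg (le_max_right _ _) (clip_nonneg hβ₂ x _))

end Clip

/-- `HA1`, `HA1s`, `HA2s` stand for `H(A¹)`, `H(A¹*) = H(A²)` and `H(A²*)`. -/
theorem stmt7_general (HA1 HA1s HA2s : ℝ → ℝ) (β₁ β₂ : ℝ → ℝ) (x t : ℝ) (ht : 0 ≤ t)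
    (hHA1n : ∀ s, 0 ≤ HA1 s) (hHA1sn : ∀ s, 0 ≤ HA1s s) (hHA2sn : ∀ s, 0 ≤ HA2s s)
    (hβ₁ : Monotone β₁) (hβ₂ : Monotone β₂)
    (hβ₁n : ∀ s, 0 ≤ β₁ s) (hβ₂n : ∀ s, 0 ≤ β₂ s) :
    sSup ((fun s => minConv HA1 (clip (minConv β₁ β₂) x) s - HA2s s) '' Set.Icc 0 t) ≤
      sSup ((fun u => minConv HA1 (clip β₁ x) u - HA1s u) '' Set.Icc 0 t) +
      sSup ((fun s => minConv HA1s (clip β₂ x) s - HA2s s) '' Set.Icc 0 t) := by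
  have hc₁ := clip_nonneg hβ₁n x
  have hc₂ := clip_nonneg hβ₂n x
  have hM₁ := bddAbove_image_minConv_sub hHA1n hc₁ (hβ₁.clip x) hHA1sn t
  have hM₂ := bddAbove_image_minConv_sub hHA1sn hc₂ (hβ₂.clip x) hHA2sn t
  set S₁ := sSup ((fun u => minConv HA1 (clip β₁ x) u - HA1s u) '' Icc 0 t)
  set S₂ := sSup ((fun s => minConv HA1s (clip β₂ x) s - HA2s s) '' Icc 0 t)
  refine csSup_le ⟨_, 0, ⟨le_rfl, ht⟩, rfl⟩ ?_
  rintro _ ⟨s, hs, rfl⟩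
  rw [sub_le_iff_le_add, add_assoc]
  calc minConv HA1 (clip (minConv β₁ β₂) x) s
      ≤ minConv HA1 (minConv (clip β₁ x) (clip β₂ x)) s :=
        minConv_mono_right hHA1n (clip_nonneg (minConv_nonneg hβ₁n hβ₂n) x) hs.1
          fun _ hu => clip_minConv_le_minConv_clip hβ₁n hβ₂n hu.1
    _ ≤ minConv (minConv HA1 (clip β₁ x)) (clip β₂ x) s := minConv_assoc_le hHA1n hc₁ hc₂ hs.1
    _ ≤ S₁ + minConv HA1s (clip β₂ x) s :=
        minConv_le_add_minConv (minConv_nonneg hHA1n hc₁) hc₂ hs.1 fun v hv =>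
          sub_le_iff_le_add.1 (le_csSup hM₁ ⟨v, ⟨hv.1, hv.2.trans hs.2⟩, rfl⟩)
    _ ≤ S₁ + (S₂ + HA2s s) :=
        add_le_add_right (sub_le_iff_le_add.1 (le_csSup hM₂ ⟨s, hs, rfl⟩)) _

/-- Concatenation, pathwise inequality for two nodes in tandem:
`A¹` is the input of node 1 with information `HA1`, its output (= input of node 2)
has information `HA1s`, and the final output has information `HA2s`. -/
theorem stmt7 (HA1 HA1s HA2s : ℝ → ℝ) (β₁ β₂ : ℝ → ℝ) (x t : ℝ) (hx : 0 ≤ x) (ht : 0 ≤ t)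
    (hHA1 : Monotone HA1) (hHA1s : Monotone HA1s) (hHA2s : Monotone HA2s)
    (hHA1n : ∀ s, 0 ≤ HA1 s) (hHA1sn : ∀ s, 0 ≤ HA1s s) (hHA2sn : ∀ s, 0 ≤ HA2s s)
    (hHA10 : HA1 0 = 0) (hHA1s0 : HA1s 0 = 0) (hHA2s0 : HA2s 0 = 0)
    (hβ₁ : Monotone β₁) (hβ₂ : Monotone β₂)
    (hβ₁n : ∀ s, 0 ≤ β₁ s) (hβ₂n : ∀ s, 0 ≤ β₂ s) :
    sSup ((fun s => minConv HA1 (clip (minConv β₁ β₂) x) s - HA2s s) '' Set.Icc 0 t) ≤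
      sSup ((fun u => minConv HA1 (clip β₁ x) u - HA1s u) '' Set.Icc 0 t) +
      sSup ((fun s => minConv HA1s (clip β₂ x) s - HA2s s) '' Set.Icc 0 t) :=
  stmt7_general HA1 HA1s HA2s β₁ β₂ x t ht hHA1n hHA1sn hHA2sn hβ₁ hβ₂ hβ₁n hβ₂n
end
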